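/- arXiv:1312.3002 — 2 statements merged into one kernel-verified Lean document; each statement's English description precedes it below -/
import Mathlib

section
/- Fix natural numbers h ≥ 1 and k with 1 ≤ k ≤ h. Define I_s = 3^s 2 (s copies of 3 followed by a 2), K_{h,k} = I_{h-1} I_{h-2} ... I_{k+1} I_k 3^k, and L_h = I_{h-1} I_{h-2} ... I_1. Then: (a) I_{h-1}...I_k 3^{k-1} ≾ L_h ≺ I_{h-1}...I_k 3^k = K_{h,k}; and (b) K_{h,1} ≺ K_{h,2} ≺ ... ≺ K_{h,h}. -/
open scoped Classical

/-- Words: finite strings over the alphabet of natural numbers. -/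
abbrev Word := List ℕ

/-- Lexicographic "not greater" comparison of finite sequences of words,
where entries are compared with the preorder `r`. -/
def LexLe (r : Word → Word → Prop) (xs ys : List Word) : Prop :=
  (xs.length ≤ ys.length ∧ ∀ i < xs.length,
      r (xs.getD i []) (ys.getD i []) ∧ r (ys.getD i []) (xs.getD i []))
  ∨ ∃ s, s < xs.length ∧ s < ys.length ∧
      (∀ i < s, r (xs.getD i []) (ys.getD i []) ∧ r (ys.getD i []) (xs.getD i [])) ∧
      r (xs.getD s []) (ys.getD s []) ∧ ¬ r (ys.getD s []) (xs.getD s [])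

/-- `M` is a lexicographically maximal subsequence of `xs` (w.r.t. entry preorder `r`). -/
def IsLexMax (r : Word → Word → Prop) (xs M : List Word) : Prop :=
  M.Sublist xs ∧ ∀ N : List Word, N.Sublist xs → LexLe r N M

/-- Fuelled version of the recursively defined preorder `≾` on words:
`Λ ≾ Λ`; and if `n` is the minimal symbol of `A ++ B`, split `A` and `B` into
blocks at `n` and compare the lexicographically maximal subsequences of blocks. -/
def leAux : ℕ → Word → Word → Prop
  | 0, A, B => A = [] ∧ B = []
  | (fuel+1), A, B =>
      (A = [] ∧ B = []) ∨
      (∀ m, (A ++ B).min? = some m →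
        ∀ MA MB : List Word, IsLexMax (leAux fuel) (A.splitOn m) MA →
          IsLexMax (leAux fuel) (B.splitOn m) MB →
          LexLe (leAux fuel) MA MB)

/-- The preorder `≾` on words (the fuel `|A|+|B|+1` suffices for the recursion). -/
def Wle (A B : Word) : Prop := leAux (A.length + B.length + 1) A B

/-- The equivalence `∼`: `A ≾ B` and `B ≾ A`. -/
def Wequiv (A B : Word) : Prop := Wle A B ∧ Wle B A

/-- The strict relation `≺`: `A ≾ B` and not `B ≾ A`. -/
def Wlt (A B : Word) : Prop := Wle A B ∧ ¬ Wle B A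

/-- Fuelled version of the normal form predicate `NF`. -/
def NFAux : ℕ → Word → Prop
  | 0, A => A = []
  | (fuel+1), A => A = [] ∨ ∀ m, A.min? = some m →
      (A.splitOn m).Chain' (fun x y => Wle y x) ∧ ∀ b ∈ A.splitOn m, NFAux fuel b

/-- `A` is in normal form. -/
def InNF (A : Word) : Prop := NFAux A.length A

/-- `◇ₖ A`: the normal form of the word `A` with symbol `k` appended. -/
noncomputable def diamond (k : ℕ) (A : Word) : Word :=
  if h : ∃ B, InNF B ∧ Wequiv B (A ++ [k]) then h.choose else []

/-- Fuelled version of the ordinal value functions `o_n` on normal-form words in `S_n`. -/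
noncomputable def oAux : ℕ → ℕ → Word → Ordinal
  | 0, _, _ => 0
  | (fuel+1), n, A =>
      if A.all (· = n) then (A.length : Ordinal)
      else ((A.splitOn n).map (fun b => Ordinal.omega0 ^ oAux fuel (n+1) b)).foldr (· + ·) 0

/-- The ordinal value function `o_n : NF ∩ S_n → Ordinals`. -/
noncomputable def oW (n : ℕ) (A : Word) : Ordinal :=
  oAux (A.foldr max 0 + A.length + 1) n A

/-- The towers of `ω`-exponentiations: `ω_0 = 1`, `ω_{n+1} = ω ^ ω_n`. -/
noncomputable def omegaTower : ℕ → Ordinal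
  | 0 => 1
  | (n+1) => Ordinal.omega0 ^ omegaTower n

/-- `ε₀`, the supremum of the `ω`-towers. -/
noncomputable def eps0 : Ordinal := ⨆ n : ℕ, omegaTower n

/-- The function `ψ` on ordinals: `ψ 0 = ω`, and for `α > 0` with Cantor normal form
`ω^{α_1}+⋯+ω^{α_n}` (non-increasing exponents), `ψ α = ω^{α_1}+⋯+ω^{α_{n-1}}+ω^{α_n+1}`. -/
noncomputable def psi (α : Ordinal) : Ordinal :=
  match (Ordinal.CNF Ordinal.omega0 α).getLast? with
  | none => Ordinal.omega0
  | some p =>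
      ((Ordinal.CNF Ordinal.omega0 α).dropLast).foldr
        (fun q r => Ordinal.omega0 ^ q.1 * q.2 + r) 0
      + (Ordinal.omega0 ^ p.1 * (p.2 - 1) + Ordinal.omega0 ^ (p.1 + 1))

/-- The standard fundamental sequences `α[n]` for limit ordinals below `ε₀`
(junk values elsewhere). -/
noncomputable def fundSeq (α : Ordinal) (n : ℕ) : Ordinal :=
  match (Ordinal.CNF Ordinal.omega0 α).getLast? with
  | none => 0
  | some p =>
    let pre := ((Ordinal.CNF Ordinal.omega0 α).dropLast).foldr
        (fun q r => Ordinal.omega0 ^ q.1 * q.2 + r) 0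
      + Ordinal.omega0 ^ p.1 * (p.2 - 1)
    if p.1 = 0 then 0
    else if h : ∃ e', p.1 = e' + 1 then
      pre + Ordinal.omega0 ^ h.choose * ((n : Ordinal) + 1)
    else if hlt : p.1 < α then pre + Ordinal.omega0 ^ (fundSeq p.1 n) else 0
termination_by α
decreasing_by exact hlt

/-- The relation `R`: `α R β` iff `β = α + 1`, or `β` is a limit and `α = β[n]` for some `n`. -/
def Rrel (α β : Ordinal) : Prop :=
  β = α + 1 ∨ (Order.IsSuccLimit β ∧ ∃ n : ℕ, α = fundSeq β n)
/-- `I_s = 3^s 2`. -/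
def Iword (s : ℕ) : Word := List.replicate s 3 ++ [2]

/-- `I_{h-1} I_{h-2} … I_k`. -/
def Ipre (h k : ℕ) : Word := (((List.range' k (h - k)).reverse).map Iword).flatten

/-- `K_{h,k} = I_{h-1} … I_k 3^k`. -/
def Kword (h k : ℕ) : Word := Ipre h k ++ List.replicate k 3

/-- `L_h = I_{h-1} … I_1`. -/
def Lword (h : ℕ) : Word := Ipre h 1

/-!
All words involved have the form `3^{a₀} 2 3^{a₁} 2 ⋯ 2 3^{aₙ}` with `a₀ ≥ a₁ ≥ ⋯ ≥ aₙ`.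
Splitting at the minimal symbol `2` gives the blocks `3^{aᵢ}`, and two such blocks compare
by length (splitting them at `3` leaves `aᵢ + 1` empty blocks). A nonincreasing sequence of
exponents is its own lexicographically maximal subsequence, so `≾` on these words is the
lexicographic order on exponent lists. In these terms
`I_{h-1} ⋯ I_k 3^{k-1} = [h-1, …, k, k-1]`, `L_h = [h-1, …, 1, 0]` and `K_{h,k} = [h-1, …, k, k]`,
and every claim is a one-line lexicographic comparison.
-/

namespace List

section LinearOrder

variable {α : Type*} [LinearOrder α]

/-- Mathlib's `LinearOrder (List α)` overrides core's `≤` on lists, so core's lemma applies only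
after unfolding both sides to `¬ _ < _`. -/
theorem cons_le_cons_iff_of_linearOrder {a b : α} {l₁ l₂ : List α} :
    a :: l₁ ≤ b :: l₂ ↔ a < b ∨ a = b ∧ l₁ ≤ l₂ := by
  rw [← not_lt, ← not_lt]
  exact cons_le_cons_iff

theorem Sublist.le_of_pairwise_ge {l' l : List α} (h : l' <+ l) (hl : l.Pairwise (· ≥ ·)) :
    l' ≤ l := by
  induction l generalizing l' with
  | nil => rw [sublist_nil.mp h]
  | cons a l ih =>
    cases l' with
    | nil => exact not_lt.mp (nil_le _)
    | cons b l' =>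
      have hba : b ≤ a := by
        rcases mem_cons.mp (h.subset mem_cons_self) with rfl | hb
        · exact le_rfl
        · exact (pairwise_cons.mp hl).1 b hb
      rw [cons_le_cons_iff_of_linearOrder]
      exact hba.lt_or_eq.imp_right fun hab => ⟨hab, ih h.tail (pairwise_cons.mp hl).2⟩

end LinearOrder

variable {α : Type*}

theorem splitOn_replicate_self [BEq α] [LawfulBEq α] (a : ℕ) (c : α) :
    (replicate a c).splitOn c = replicate (a + 1) [] := by
  induction a with
  | zero => rfl
  | succ a ih =>
    rw [replicate_succ, ← nil_append (c :: _), splitOn_append_cons_self_of_not_mem not_mem_nil,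
      ih]
    rfl

theorem flatten_map_append_singleton_append (l : List (List α)) (a : α)
    (x : List α) : (l.map (· ++ [a])).flatten ++ x = [a].intercalate (l ++ [x]) := by
  induction l with
  | nil => simp
  | cons y l ih => simp [ih, intercalate_cons_of_ne_nil]

theorem pairwise_ge_reverse_range'_append {k n j : ℕ} (hj : j ≤ k) :
    ((range' k n).reverse ++ [j]).Pairwise (· ≥ ·) := by
  refine pairwise_append.mpr ⟨pairwise_reverse.mpr ((pairwise_lt_range' _).imp le_of_lt),
    pairwise_singleton _ _, fun x hx y hy => ?_⟩
  rw [mem_singleton.mp hy]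
  exact hj.trans (mem_range'_1.mp (mem_reverse.mp hx)).1

theorem reverse_range'_one_append_zero (m n : ℕ) :
    (range' 1 (m + n)).reverse ++ [0] =
      (range' (m + 1) n).reverse ++ m :: (range' 0 m).reverse := by
  calc (range' 1 (m + n)).reverse ++ [0] = (range' 0 ((m + 1) + n)).reverse := by
        rw [Nat.add_right_comm, range'_succ, reverse_cons]
    _ = _ := by rw [← range'_append, range'_concat]; simp

end List

open List

section LexLe

variable {r : Word → Word → Prop}

theorem lexLe_nil_left (ys : List Word) : LexLe r [] ys :=
  Or.inl ⟨Nat.zero_le _, fun _ h => absurd h (Nat.not_lt_zero _)⟩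

theorem not_lexLe_cons_nil (x : Word) (xs : List Word) : ¬ LexLe r (x :: xs) [] := by
  rintro (⟨h, -⟩ | ⟨s, -, h, -⟩) <;> simp at h

theorem lexLe_cons_cons {x y : Word} {xs ys : List Word} :
    LexLe r (x :: xs) (y :: ys) ↔
      (r x y ∧ ¬ r y x) ∨ (r x y ∧ r y x) ∧ LexLe r xs ys := by
  constructor
  · rintro (⟨hl, he⟩ | ⟨_ | s, hs₁, hs₂, he, hlt, hngt⟩)
    · exact Or.inr ⟨he 0 (by simp),
        Or.inl ⟨by simpa using hl, fun i hi => he (i + 1) (by simpa using hi)⟩⟩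
    · exact Or.inl ⟨hlt, hngt⟩
    · exact Or.inr ⟨he 0 (by simp), Or.inr ⟨s, by simpa using hs₁, by simpa using hs₂,
        fun i hi => he (i + 1) (by omega), hlt, hngt⟩⟩
  · rintro (⟨hlt, hngt⟩ | ⟨h0, ⟨hl, he⟩ | ⟨s, hs₁, hs₂, he, hlt, hngt⟩⟩)
    · exact Or.inr ⟨0, by simp, by simp, fun _ h => absurd h (Nat.not_lt_zero _), hlt, hngt⟩
    · refine Or.inl ⟨by simpa using hl, fun i hi => ?_⟩
      cases i with
      | zero => exact h0
      | succ i => exact he i (by simpa using hi)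
    · refine Or.inr ⟨s + 1, by simpa using hs₁, by simpa using hs₂, fun i hi => ?_, hlt,
        hngt⟩
      cases i with
      | zero => exact h0
      | succ i => exact he i (by omega)

theorem lexLe_map_iff {α : Type*} [LinearOrder α] {g : α → Word}
    (hg : ∀ a b, r (g a) (g b) ↔ a ≤ b) :
    ∀ l₁ l₂ : List α, LexLe r (l₁.map g) (l₂.map g) ↔ l₁ ≤ l₂
  | [], l₂ => iff_of_true (lexLe_nil_left _) (not_lt.mp (nil_le l₂))
  | a :: l₁, [] => iff_of_false (not_lexLe_cons_nil _ _) (not_le.mpr Lex.nil)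
  | a :: l₁, b :: l₂ => by
    rw [map_cons, map_cons, lexLe_cons_cons, hg, hg, lexLe_map_iff hg l₁ l₂,
      cons_le_cons_iff_of_linearOrder, ← lt_iff_le_not_ge, ← le_antisymm_iff]

theorem isLexMax_map_iff {α : Type*} [LinearOrder α] {g : α → Word}
    (hg : ∀ a b, r (g a) (g b) ↔ a ≤ b) {l : List α} (hl : l.Pairwise (· ≥ ·))
    {M : List Word} : IsLexMax r (l.map g) M ↔ M = l.map g := by
  constructor
  · rintro ⟨hM, hmax⟩
    obtain ⟨l', hl', rfl⟩ := sublist_map_iff.mp hM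
    have hle : l ≤ l' := (lexLe_map_iff hg l l').mp (hmax _ (Sublist.refl _))
    rw [le_antisymm (hl'.le_of_pairwise_ge hl) hle]
  · rintro rfl
    refine ⟨Sublist.refl _, fun N hN => ?_⟩
    obtain ⟨l', hl', rfl⟩ := sublist_map_iff.mp hN
    exact (lexLe_map_iff hg l' l).mpr (hl'.le_of_pairwise_ge hl)

theorem lexLe_replicate_nil_iff (hr : r [] []) (a b : ℕ) :
    LexLe r (replicate a []) (replicate b []) ↔ a ≤ b := by
  have hget : ∀ n i, (replicate n ([] : Word)).getD i [] = [] := fun n i => by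
    rw [getD_eq_getElem?_getD, getElem?_replicate]; split <;> rfl
  constructor
  · rintro (⟨h, -⟩ | ⟨s, -, -, -, -, hngt⟩)
    · simpa using h
    · exact absurd (by rw [hget, hget]; exact hr) hngt
  · intro h
    exact Or.inl ⟨by simpa using h, fun i _ => by rw [hget, hget]; exact ⟨hr, hr⟩⟩

theorem isLexMax_replicate_nil_iff (hr : r [] []) (n : ℕ) {M : List Word} :
    IsLexMax r (replicate n []) M ↔ M = replicate n [] := by
  constructor
  · rintro ⟨hM, hmax⟩
    obtain ⟨l, hl, rfl⟩ := sublist_replicate_iff.mp hM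
    rw [le_antisymm hl ((lexLe_replicate_nil_iff hr n l).mp (hmax _ (Sublist.refl _)))]
  · rintro rfl
    refine ⟨Sublist.refl _, fun N hN => ?_⟩
    obtain ⟨l, hl, rfl⟩ := sublist_replicate_iff.mp hN
    exact (lexLe_replicate_nil_iff hr l n).mpr hl

end LexLe

theorem leAux_nil : ∀ f, leAux f ([] : Word) []
  | 0 => ⟨rfl, rfl⟩
  | _ + 1 => Or.inl ⟨rfl, rfl⟩

theorem leAux_succ_iff_lexLe {f m : ℕ} {A B : Word} (hm : (A ++ B).min? = some m)
    {XA XB : List Word} (hA : ∀ M, IsLexMax (leAux f) (A.splitOn m) M ↔ M = XA)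
    (hB : ∀ M, IsLexMax (leAux f) (B.splitOn m) M ↔ M = XB) :
    leAux (f + 1) A B ↔ LexLe (leAux f) XA XB := by
  have hAB : ¬ (A = [] ∧ B = []) := by
    rintro ⟨rfl, rfl⟩
    simp at hm
  simp only [leAux, hAB, false_or, hm, Option.some.injEq, forall_eq', hA, hB]
  exact ⟨fun h => h _ _ rfl rfl, by rintro h _ _ rfl rfl; exact h⟩

theorem leAux_replicate_iff (f a b c : ℕ) :
    leAux (f + 1) (replicate a c) (replicate b c) ↔ a ≤ b := by
  rcases Nat.eq_zero_or_pos (a + b) with hab | hab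
  · obtain ⟨rfl, rfl⟩ : a = 0 ∧ b = 0 := by omega
    exact iff_of_true (leAux_nil _) le_rfl
  · have hm : (replicate a c ++ replicate b c).min? = some c := by
      rw [← replicate_add, min?_replicate, if_neg hab.ne']
    have hmax (n : ℕ) (M : List Word) :
        IsLexMax (leAux f) ((replicate n c).splitOn c) M ↔ M = replicate (n + 1) [] := by
      rw [splitOn_replicate_self]
      exact isLexMax_replicate_nil_iff (leAux_nil f) _
    rw [leAux_succ_iff_lexLe hm (hmax a) (hmax b), lexLe_replicate_nil_iff (leAux_nil f)]
    omega

def blockWord (c d : ℕ) (e : List ℕ) : Word := [c].intercalate (e.map (replicate · d))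

section BlockWord

variable {c d : ℕ}

theorem splitOn_blockWord (hcd : c ≠ d) {e : List ℕ} (he : e ≠ []) :
    (blockWord c d e).splitOn c = e.map (replicate · d) :=
  splitOn_intercalate c (by simp [mem_replicate, hcd]) (by simpa using he)

theorem mem_blockWord {e : List ℕ} {x : ℕ} (hx : x ∈ blockWord c d e) : x = c ∨ x = d := by
  induction e with
  | nil => simp [blockWord] at hx
  | cons a e ih =>
    cases e with
    | nil => exact Or.inr (eq_of_mem_replicate (by simpa [blockWord] using hx))
    | cons b e =>
      simp only [blockWord, map_cons, intercalate_cons_cons, mem_append, mem_singleton] at hx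
      rcases hx with (hx | hx) | hx
      · exact Or.inr (eq_of_mem_replicate hx)
      · exact Or.inl hx
      · exact ih hx

theorem min?_blockWord_append (hcd : c ≤ d) {e₁ e₂ : List ℕ}
    (he : 2 ≤ e₁.length ∨ 2 ≤ e₂.length) :
    (blockWord c d e₁ ++ blockWord c d e₂).min? = some c := by
  have hc : ∀ e : List ℕ, 2 ≤ e.length → c ∈ blockWord c d e
    | a :: b :: e, _ => by simp [blockWord]
  refine min?_eq_some_iff.mpr ⟨mem_append.mpr (he.imp (hc _) (hc _)), fun x hx => ?_⟩
  rcases mem_append.mp hx with hx | hx <;> rcases mem_blockWord hx with rfl | rfl <;> omega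

theorem leAux_blockWord_iff (hcd : c < d) (f : ℕ) {e₁ e₂ : List ℕ}
    (h₁ : e₁ ≠ []) (h₂ : e₂ ≠ [])
    (p₁ : e₁.Pairwise (· ≥ ·)) (p₂ : e₂.Pairwise (· ≥ ·))
    (he : 2 ≤ e₁.length ∨ 2 ≤ e₂.length) :
    leAux (f + 2) (blockWord c d e₁) (blockWord c d e₂) ↔ e₁ ≤ e₂ := by
  have hmax {e : List ℕ} (hne : e ≠ []) (p : e.Pairwise (· ≥ ·)) (M : List Word) :
      IsLexMax (leAux (f + 1)) ((blockWord c d e).splitOn c) M ↔ M = e.map (replicate · d) := by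
    rw [splitOn_blockWord hcd.ne hne]
    exact isLexMax_map_iff (leAux_replicate_iff f · · d) p
  rw [leAux_succ_iff_lexLe (min?_blockWord_append hcd.le he) (hmax h₁ p₁) (hmax h₂ p₂)]
  exact lexLe_map_iff (leAux_replicate_iff f · · d) e₁ e₂

theorem wle_blockWord_iff (hcd : c < d) {e₁ e₂ : List ℕ} (h₁ : e₁ ≠ []) (h₂ : e₂ ≠ [])
    (p₁ : e₁.Pairwise (· ≥ ·)) (p₂ : e₂.Pairwise (· ≥ ·)) :
    Wle (blockWord c d e₁) (blockWord c d e₂) ↔ e₁ ≤ e₂ := by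
  by_cases he : 2 ≤ e₁.length ∨ 2 ≤ e₂.length
  · obtain ⟨f, hf⟩ : ∃ f, (blockWord c d e₁).length + (blockWord c d e₂).length = f + 1 := by
      have hne := min?_blockWord_append hcd.le he
      rw [← length_append]
      exact Nat.exists_eq_add_one.mpr (length_pos_iff.mpr fun h => by simp [h] at hne)
    rw [Wle, hf]
    exact leAux_blockWord_iff hcd f h₁ h₂ p₁ p₂ he
  · obtain ⟨a, rfl⟩ := length_eq_one_iff.mp
      (show e₁.length = 1 by have := length_pos_iff.mpr h₁; omega)
    obtain ⟨b, rfl⟩ := length_eq_one_iff.mp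
      (show e₂.length = 1 by have := length_pos_iff.mpr h₂; omega)
    simp only [Wle, blockWord, map_cons, map_nil, intercalate_singleton, leAux_replicate_iff]
    rw [cons_le_cons_iff_of_linearOrder, and_iff_left le_rfl, le_iff_lt_or_eq]

end BlockWord

theorem ipre_append_replicate (h k j : ℕ) :
    Ipre h k ++ replicate j 3 = blockWord 2 3 ((range' k (h - k)).reverse ++ [j]) := by
  rw [Ipre, blockWord, map_append, map_singleton, ← flatten_map_append_singleton_append, map_map]
  rfl

theorem wle_ipre_append_iff {h k j h' k' j' : ℕ} (hj : j ≤ k) (hj' : j' ≤ k') :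
    Wle (Ipre h k ++ replicate j 3) (Ipre h' k' ++ replicate j' 3) ↔
      (range' k (h - k)).reverse ++ [j] ≤ (range' k' (h' - k')).reverse ++ [j'] := by
  rw [ipre_append_replicate, ipre_append_replicate]
  exact wle_blockWord_iff (by norm_num) (by simp) (by simp)
    (pairwise_ge_reverse_range'_append hj) (pairwise_ge_reverse_range'_append hj')

theorem wlt_ipre_append_iff {h k j h' k' j' : ℕ} (hj : j ≤ k) (hj' : j' ≤ k') :
    Wlt (Ipre h k ++ replicate j 3) (Ipre h' k' ++ replicate j' 3) ↔
      (range' k (h - k)).reverse ++ [j] < (range' k' (h' - k')).reverse ++ [j'] := by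
  rw [Wlt, wle_ipre_append_iff hj hj', wle_ipre_append_iff hj' hj, lt_iff_le_not_ge]

theorem K_L_comparison (h k : ℕ) (h1 : 1 ≤ k) (h2 : k ≤ h) :
    (Wle (Ipre h k ++ List.replicate (k-1) 3) (Lword h) ∧
     Wlt (Lword h) (Kword h k)) ∧
    (k < h → Wlt (Kword h k) (Kword h (k+1))) := by
  obtain ⟨n, rfl⟩ := Nat.exists_eq_add_of_le h2
  obtain ⟨m, rfl⟩ := Nat.exists_eq_add_of_le' h1
  have hL : Lword (m + 1 + n) = Ipre (m + 1 + n) 1 ++ replicate 0 3 := (append_nil _).symm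
  rw [Kword, Kword, hL, wle_ipre_append_iff (by omega) (by omega),
    wlt_ipre_append_iff (by omega) le_rfl, wlt_ipre_append_iff le_rfl le_rfl,
    Nat.add_sub_cancel_left, show m + 1 + n - 1 = m + n by omega, reverse_range'_one_append_zero]
  -- exponent lists, with `D = [m+n, …, m+1]`: `D ++ [m]` (first word), `D ++ m :: [m-1, …, 0]` (L),
  -- `D ++ [m+1]` (K)
  refine ⟨⟨not_lt.mp (IsPrefix.le ⟨(range' 0 m).reverse, by simp⟩),
    append_left_lt (cons_lt_cons_iff.mpr (Or.inl m.lt_succ_self))⟩, fun hn => ?_⟩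
  obtain ⟨n, rfl⟩ : ∃ n', n = n' + 1 := ⟨n - 1, by omega⟩
  rw [show m + 1 + (n + 1) - (m + 1 + 1) = n by omega, range'_succ,
    reverse_cons, append_assoc]
  exact append_left_lt (cons_lt_cons_iff.mpr (Or.inl (m + 1).lt_succ_self))
end

section
/- For every nonzero ordinal β < ε₀ with Cantor normal form ω^{β_1} + ... + ω^{β_{k-1}} + ω^{β_k}·n (where k, n ≥ 1 and β_1 ≥ ... ≥ β_{k-1} > β_k), one has ψ(β) = ω^{β_1} + ... + ω^{β_{k-1}} + ω^{β_k + 1}, and β R ψ(β) holds, i.e., ψ(β) is a limit ordinal and β is a member of the standard fundamental sequence of ψ(β). -/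
open scoped Classical

/-!
Write the Cantor normal form of `β` as `γ + ω^e * c` with `0 < c < ω`, where every exponent of
`γ` exceeds `e`. Since `ω^e * (c - 1) + ω^(e+1) = ω^(e+1)`, we get `ψ β = γ + ω^(e+1)`, a limit.
Its last Cantor normal form term has exponent `e + 1`: either it is the single new term
`ω^(e+1)`, or `γ` already ends with `ω^(e+1) * d` and the two merge into `ω^(e+1) * (d + 1)`.
In both cases the successor rule for fundamental sequences gives
`(ψ β)[c - 1] = γ + ω^e * c = β`.
-/

open Ordinal List

noncomputable def cnfEval (L : List (Ordinal × Ordinal)) : Ordinal :=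
  L.foldr (fun q r => ω ^ q.1 * q.2 + r) 0

def IsCNF (L : List (Ordinal × Ordinal)) : Prop :=
  L.Pairwise (fun p q => q.1 < p.1) ∧ ∀ p ∈ L, 0 < p.2 ∧ p.2 < ω

@[simp]
lemma cnfEval_nil : cnfEval [] = 0 := rfl

@[simp]
lemma cnfEval_cons (p : Ordinal × Ordinal) (L : List (Ordinal × Ordinal)) :
    cnfEval (p :: L) = ω ^ p.1 * p.2 + cnfEval L := rfl

lemma cnfEval_append (L₁ L₂ : List (Ordinal × Ordinal)) :
    cnfEval (L₁ ++ L₂) = cnfEval L₁ + cnfEval L₂ := by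
  induction L₁ with
  | nil => simp
  | cons p L ih => rw [cons_append, cnfEval_cons, cnfEval_cons, ih, add_assoc]

lemma cnfEval_append_singleton (L : List (Ordinal × Ordinal)) (a c : Ordinal) :
    cnfEval (L ++ [(a, c)]) = cnfEval L + ω ^ a * c := by
  simp [cnfEval_append]

lemma cnfEval_CNF (o : Ordinal) : cnfEval (CNF ω o) = o :=
  CNF.foldr ω o

lemma isCNF_CNF (o : Ordinal) : IsCNF (CNF ω o) :=
  ⟨pairwise_map.1 (sortedGT_iff_pairwise.1 (CNF.sortedGT ω o)),
    fun _ hp => ⟨CNF.snd_pos hp, CNF.snd_lt one_lt_omega0 hp⟩⟩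

lemma isCNF_cons {p : Ordinal × Ordinal} {L : List (Ordinal × Ordinal)} :
    IsCNF (p :: L) ↔ IsCNF L ∧ (∀ q ∈ L, q.1 < p.1) ∧ 0 < p.2 ∧ p.2 < ω := by
  simp only [IsCNF, pairwise_cons, forall_mem_cons]
  tauto

lemma isCNF_append_singleton {L : List (Ordinal × Ordinal)} {a c : Ordinal} :
    IsCNF (L ++ [(a, c)]) ↔ IsCNF L ∧ (∀ q ∈ L, a < q.1) ∧ 0 < c ∧ c < ω := by
  simp only [IsCNF, pairwise_append, pairwise_singleton, mem_singleton, forall_eq,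
    mem_append, or_imp, forall_and, true_and]
  tauto

lemma isCNF_singleton {a c : Ordinal} (hc : 0 < c) (hcω : c < ω) : IsCNF [(a, c)] :=
  isCNF_append_singleton (L := []).2 ⟨⟨.nil, by simp⟩, by simp, hc, hcω⟩

lemma cnfEval_lt_opow {L : List (Ordinal × Ordinal)} (hL : IsCNF L) {x : Ordinal}
    (hx : ∀ p ∈ L, p.1 < x) : cnfEval L < ω ^ x := by
  induction L generalizing x with
  | nil => exact opow_pos x omega0_pos
  | cons p L ih =>
    obtain ⟨hL, hLp, -, hpω⟩ := isCNF_cons.1 hL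
    exact opow_mul_add_lt_opow hpω (ih hL hLp) (hx p mem_cons_self)

lemma CNF_cnfEval {L : List (Ordinal × Ordinal)} (hL : IsCNF L) : CNF ω (cnfEval L) = L := by
  induction L with
  | nil => exact CNF.zero_right ω
  | cons p L ih =>
    obtain ⟨hL, hLp, hp0, hpω⟩ := isCNF_cons.1 hL
    rw [cnfEval_cons, CNF.opow_mul_add one_lt_omega0 hp0.ne' hpω (cnfEval_lt_opow hL hLp), ih hL]

lemma opow_mul_add_opow_add_one {e d : Ordinal} (hd : d < ω) :
    ω ^ e * d + ω ^ (e + 1) = ω ^ (e + 1) := by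
  rw [opow_add, opow_one, ← mul_add, add_omega0 hd]

lemma exists_CNF_cnfEval_add_opow {M : List (Ordinal × Ordinal)} (hM : IsCNF M) {x : Ordinal}
    (hx : ∀ p ∈ M, x ≤ p.1) :
    ∃ (P : List (Ordinal × Ordinal)) (d : ℕ),
      CNF ω (cnfEval M + ω ^ x) = P ++ [(x, (d : Ordinal) + 1)] ∧
        cnfEval M = cnfEval P + ω ^ x * d := by
  rcases M.eq_nil_or_concat' with rfl | ⟨L, ⟨y, k⟩, rfl⟩
  · refine ⟨[], 0, ?_, by simp⟩
    simpa using CNF_cnfEval (isCNF_singleton (a := x) zero_lt_one one_lt_omega0)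
  obtain ⟨hL, hLy, -, hkω⟩ := isCNF_append_singleton.1 hM
  obtain ⟨m, rfl⟩ := lt_omega0.1 hkω
  rcases (hx _ (mem_append_right L (mem_singleton_self _))).eq_or_lt with rfl | hxy
  · refine ⟨L, m, ?_, cnfEval_append_singleton L x m⟩
    have hmerge : cnfEval (L ++ [(x, (m : Ordinal))]) + ω ^ x
        = cnfEval (L ++ [(x, (m : Ordinal) + 1)]) := by
      rw [cnfEval_append_singleton, cnfEval_append_singleton, add_assoc, mul_add_one]
    rw [hmerge, CNF_cnfEval (isCNF_append_singleton.2
      ⟨hL, hLy, add_pos_of_right zero_lt_one _, by exact_mod_cast natCast_lt_omega0 (m + 1)⟩)]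
  · refine ⟨L ++ [(y, (m : Ordinal))], 0, ?_, by simp⟩
    have hx' : ∀ q ∈ L ++ [(y, (m : Ordinal))], x < q.1 := by
      simp only [mem_append, mem_singleton]
      rintro q (hq | rfl)
      exacts [hxy.trans (hLy q hq), hxy]
    rw [Nat.cast_zero, zero_add, ← mul_one (ω ^ x), ← cnfEval_append_singleton]
    exact CNF_cnfEval (isCNF_append_singleton.2 ⟨hM, hx', zero_lt_one, one_lt_omega0⟩)

lemma psi_eq_of_CNF_eq {α e c : Ordinal} {L : List (Ordinal × Ordinal)}
    (h : CNF ω α = L ++ [(e, c)]) :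
    psi α = cnfEval L + (ω ^ e * (c - 1) + ω ^ (e + 1)) := by
  unfold psi
  rw [h, getLast?_concat, dropLast_concat]
  rfl

lemma fundSeq_of_CNF_eq_add_one {α x : Ordinal} {L : List (Ordinal × Ordinal)} {d : ℕ}
    (h : CNF ω α = L ++ [(x + 1, (d : Ordinal) + 1)]) (n : ℕ) :
    fundSeq α n = cnfEval L + ω ^ (x + 1) * d + ω ^ x * ((n : Ordinal) + 1) := by
  have hne : x + 1 ≠ 0 := (add_pos_of_right zero_lt_one x).ne'
  have hsucc : ∃ x', x + 1 = x' + 1 := ⟨x, rfl⟩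
  have hchoose : hsucc.choose = x :=
    Order.succ_injective (by simpa only [Order.succ_eq_add_one] using hsucc.choose_spec.symm)
  have hcoeff : (d : Ordinal) + 1 - 1 = d := by
    rw [← Nat.cast_add_one, add_comm, Nat.cast_add, Nat.cast_one, Ordinal.add_sub_cancel]
  rw [fundSeq, h, getLast?_concat]
  dsimp only
  rw [if_neg hne, dif_pos hsucc, hchoose, dropLast_concat, hcoeff]
  rfl

theorem psi_fundSeq_general (β : Ordinal) (e c : Ordinal)
    (hlast : (Ordinal.CNF Ordinal.omega0 β).getLast? = some (e, c)) :
    psi β = ((Ordinal.CNF Ordinal.omega0 β).dropLast).foldr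
        (fun q r => Ordinal.omega0 ^ q.1 * q.2 + r) 0 + Ordinal.omega0 ^ (e + 1) ∧
    Order.IsSuccLimit (psi β) ∧ ∃ n : ℕ, β = fundSeq (psi β) n := by
  set M := (CNF ω β).dropLast
  have hβ : CNF ω β = M ++ [(e, c)] := (dropLast_append_getLast? _ hlast).symm
  obtain ⟨hM, hMe, hc0, hcω⟩ := isCNF_append_singleton.1 (hβ ▸ isCNF_CNF β)
  have hpsi : psi β = cnfEval M + ω ^ (e + 1) := by
    rw [psi_eq_of_CNF_eq hβ, opow_mul_add_opow_add_one ((sub_le_self c 1).trans_lt hcω)]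
  refine ⟨hpsi, hpsi ▸ isSuccLimit_add _ (isSuccLimit_opow_left isSuccLimit_omega0
    (add_pos_of_right zero_lt_one e).ne'), ?_⟩
  obtain ⟨P, d, hCNF, hMP⟩ := exists_CNF_cnfEval_add_opow hM
    (fun p hp => Order.add_one_le_of_lt (hMe p hp))
  obtain ⟨k, rfl⟩ : ∃ k : ℕ, c = (k : Ordinal) + 1 := by
    obtain ⟨m, rfl⟩ := lt_omega0.1 hcω
    obtain ⟨k, rfl⟩ := Nat.exists_eq_add_one_of_ne_zero (by exact_mod_cast hc0.ne')
    exact ⟨k, Nat.cast_add_one k⟩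
  have hβ_eval : β = cnfEval M + ω ^ e * ((k : Ordinal) + 1) := by
    rw [← cnfEval_append_singleton, ← hβ, cnfEval_CNF]
  refine ⟨k, ?_⟩
  rw [hpsi, fundSeq_of_CNF_eq_add_one hCNF, ← hMP]
  exact hβ_eval

theorem psi_fundSeq (β : Ordinal) (h0 : 0 < β) (hε : β < eps0) (e c : Ordinal)
    (hlast : (Ordinal.CNF Ordinal.omega0 β).getLast? = some (e, c)) :
    psi β = ((Ordinal.CNF Ordinal.omega0 β).dropLast).foldr
        (fun q r => Ordinal.omega0 ^ q.1 * q.2 + r) 0 + Ordinal.omega0 ^ (e + 1) ∧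
    Order.IsSuccLimit (psi β) ∧ ∃ n : ℕ, β = fundSeq (psi β) n :=
  psi_fundSeq_general β e c hlast
end
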